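/- Let p > q ≥ 2 be relatively prime integers with p ≥ 2q−1, and let n > 0. Then the number of words w of length n over the alphabet D_{p,q} that belong to L(p,q) (i.e. that occur as factors of traces (F_{p,q}^t(c)(1))_{t∈ℤ}) is at most q^{n+1}. -/

import Mathlib

/-- The local rule multiplying by `p` in base `pq`: writing `x = x₁q + x₀` with
`x₀ ∈ {0,…,q-1}`, `x₁ ∈ {0,…,p-1}`, we have `g p q x y = x₀p + y₁`. -/
def g (p q x y : ℕ) : ℕ := x % q * p + y / q

/-- The cellular automaton `G_{p,q}` on configurations. -/
def Gca (p q : ℕ) (c : ℤ → ℕ) : ℤ → ℕ := fun i => g p q (c i) (c (i + 1))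

/-- The cellular automaton `F_{p,q} = σ⁻¹ ∘ G_{p,q} ∘ G_{p,q}`, where `σ` is the left
shift `σ(c)(i) = c(i+1)`. Its inverse is `Fca q p`. -/
def Fca (p q : ℕ) (c : ℤ → ℕ) : ℤ → ℕ := fun i => Gca p q (Gca p q c) (i - 1)

/-- Integer iterates of `F_{p,q}`. -/
def Fiter (p q : ℕ) (k : ℤ) (c : ℤ → ℕ) : ℤ → ℕ :=
  if 0 ≤ k then (Fca p q)^[k.toNat] c else (Fca q p)^[(-k).toNat] c

/-- `w ∈ L(p,q)`: the word `w` occurs in a column of a space-time diagram of `F_{p,q}`,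
i.e. there are a configuration `c` over the digits `{0,…,pq-1}` and `t₀ ∈ ℤ` with
`w(j) = F_{p,q}^{t₀+j}(c)(1)` for every position `j` of `w`. -/
def inTraceLang (p q : ℕ) (w : List ℕ) : Prop :=
  ∃ (c : ℤ → ℕ) (t₀ : ℤ), (∀ i, c i < p * q) ∧
    ∀ j : Fin w.length, w.get j = Fiter p q (t₀ + (j : ℕ)) c 1

/-! Since `F(c)(1) mod p = ⌊((c(1) mod q) p + ⌊c(2)/q⌋) / q⌋`, when `b = F(c)(1)` lies in `D_{p,q}`,
i.e. `(b mod p) q mod p < q`, the inequality `p ≥ 2q - 1` forces `c(1) mod q = ⌊(b mod p) q / p⌋`.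
So in a trace word over `D_{p,q}` each letter's residue mod `q` is read off from the next letter,
and by the Chinese remainder theorem the word is determined by the residues of its letters mod `p`
(one of `q` values each) and the residue of its last letter mod `q`. -/

section Dynamics

variable {p q : ℕ}

lemma g_lt_mul (x : ℕ) {y : ℕ} (hy : y < p * q) : g p q x y < p * q := by
  have hq : 0 < q := Nat.pos_of_ne_zero (by rintro rfl; simp at hy)
  have hy' : y / q < p := Nat.div_lt_of_lt_mul (by rwa [mul_comm])
  calc x % q * p + y / q < (x % q + 1) * p := by nlinarith
    _ ≤ q * p := Nat.mul_le_mul_right p (Nat.mod_lt x hq)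
    _ = p * q := mul_comm q p

variable {c : ℤ → ℕ}

lemma Gca_lt_mul (hc : ∀ i, c i < p * q) (i : ℤ) : Gca p q c i < p * q :=
  g_lt_mul _ (hc (i + 1))

lemma Fca_lt_mul (hc : ∀ i, c i < p * q) (i : ℤ) : Fca p q c i < p * q :=
  Gca_lt_mul (Gca_lt_mul hc) (i - 1)

lemma iterate_Fca_lt_mul (hc : ∀ i, c i < p * q) (m : ℕ) (i : ℤ) :
    (Fca p q)^[m] c i < p * q := by
  induction m generalizing i with
  | zero => exact hc i
  | succ m ih =>
    rw [Function.iterate_succ_apply']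
    exact Fca_lt_mul ih i

lemma Fiter_lt_mul (hc : ∀ i, c i < p * q) (t i : ℤ) : Fiter p q t c i < p * q := by
  unfold Fiter
  split
  · exact iterate_Fca_lt_mul hc _ i
  · rw [mul_comm]
    exact iterate_Fca_lt_mul (fun j => mul_comm p q ▸ hc j) _ i

lemma Gca_swap_Gca (hc : ∀ i, c i < p * q) (i : ℤ) : Gca q p (Gca p q c) i = c (i + 1) := by
  have hp : 0 < p := Nat.pos_of_ne_zero (by rintro rfl; simpa using hc 0)
  have hq : 0 < q := Nat.pos_of_ne_zero (by rintro rfl; simpa using hc 0)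
  have h₁ : c (i + 1) / q < p := Nat.div_lt_of_lt_mul (by rw [mul_comm]; exact hc _)
  have h₂ : c (i + 1 + 1) / q < p := Nat.div_lt_of_lt_mul (by rw [mul_comm]; exact hc _)
  show (c i % q * p + c (i + 1) / q) % p * q + (c (i + 1) % q * p + c (i + 1 + 1) / q) / p
    = c (i + 1)
  rw [Nat.mul_add_mod_self_right, Nat.mod_eq_of_lt h₁, add_comm (c (i + 1) % q * p),
    Nat.add_mul_div_right _ _ hp, Nat.div_eq_of_lt h₂, zero_add]
  exact Nat.div_add_mod' _ _

lemma Gca_comp_sub_one (d : ℤ → ℕ) :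
    Gca p q (fun i => d (i - 1)) = fun i => Gca p q d (i - 1) := by
  funext i
  simp [Gca]

lemma Fca_swap_Fca (hc : ∀ i, c i < p * q) : Fca q p (Fca p q c) = c := by
  have hG : Gca q p (Fca p q c) = Gca p q c := by
    funext j
    change Gca q p (fun i => Gca p q (Gca p q c) (i - 1)) j = _
    rw [Gca_comp_sub_one]
    simpa using Gca_swap_Gca (Gca_lt_mul hc) (j - 1)
  funext i
  change Gca q p (Gca q p (Fca p q c)) (i - 1) = c i
  rw [hG]
  simpa using Gca_swap_Gca hc (i - 1)

lemma Fiter_add_one (hc : ∀ i, c i < p * q) (t : ℤ) :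
    Fiter p q (t + 1) c = Fca p q (Fiter p q t c) := by
  have hc' : ∀ i, c i < q * p := fun i => mul_comm p q ▸ hc i
  unfold Fiter
  rcases lt_trichotomy t (-1) with ht | rfl | ht
  · rw [if_neg (by omega), if_neg (by omega), show (-t).toNat = (-(t + 1)).toNat + 1 by omega,
      Function.iterate_succ_apply', Fca_swap_Fca (iterate_Fca_lt_mul hc' _)]
  · simp [Fca_swap_Fca hc']
  · rw [if_pos (by omega), if_pos (by omega), show (t + 1).toNat = t.toNat + 1 by omega,
      Function.iterate_succ_apply']

end Dynamics

section Digits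

variable {p q : ℕ}

lemma eq_div_of_add_div_eq {a z k : ℕ} (h2q : 2 * q ≤ p + 1) (hz : z < p)
    (hk : k * q % p < q) (hak : (a * p + z) / q = k) : a = k * q / p := by
  have hq : 0 < q := Nat.pos_of_ne_zero (by rintro rfl; simp at hk)
  have h₁ := Nat.div_add_mod' (a * p + z) q
  have h₂ := Nat.mod_lt (a * p + z) hq
  have h₃ := Nat.div_add_mod' (k * q) p
  rw [hak] at h₁
  have hlt : a * p < (k * q / p + 1) * p := by rw [add_one_mul]; omega
  have hgt : k * q / p * p < (a + 1) * p := by rw [add_one_mul]; omega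
  have ha_le : a < k * q / p + 1 := Nat.lt_of_mul_lt_mul_right hlt
  have ha_ge : k * q / p < a + 1 := Nat.lt_of_mul_lt_mul_right hgt
  omega

lemma Fca_mod_left {c : ℤ → ℕ} {i : ℤ} (hc : c (i + 1) < p * q) :
    Fca p q c i % p = g p q (c i) (c (i + 1)) / q := by
  have hlt : Gca p q c i / q < p := Nat.div_lt_of_lt_mul (by
    rw [mul_comm]; exact g_lt_mul _ hc)
  show (Gca p q c (i - 1) % q * p + Gca p q c (i - 1 + 1) / q) % p = _
  rw [Nat.mul_add_mod_self_right, sub_add_cancel, Nat.mod_eq_of_lt hlt]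
  rfl

lemma mod_eq_of_Fca_mod {c : ℤ → ℕ} (hc : ∀ i, c i < p * q) (h2q : 2 * q ≤ p + 1) {i : ℤ}
    (hD : Fca p q c i % p * q % p < q) : c i % q = Fca p q c i % p * q / p := by
  refine eq_div_of_add_div_eq h2q ?_ hD (Fca_mod_left (hc _)).symm
  exact Nat.div_lt_of_lt_mul (by rw [mul_comm]; exact hc _)

lemma mod_eq_of_inTraceLang {w : List ℕ} (htr : inTraceLang p q w) (h2q : 2 * q ≤ p + 1)
    {j : ℕ} (hj : j + 1 < w.length) (hD : w[j + 1] % p * q % p < q) :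
    w[j] % q = w[j + 1] % p * q / p := by
  obtain ⟨c, t₀, hc, hw⟩ := htr
  have hwj : w[j] = Fiter p q (t₀ + j) c 1 := hw ⟨j, by omega⟩
  have hwj' : w[j + 1] = Fca p q (Fiter p q (t₀ + j) c) 1 := by
    rw [← Fiter_add_one hc, add_assoc]
    have := hw ⟨j + 1, hj⟩
    push_cast at this
    exact this
  rw [hwj'] at hD ⊢
  rw [hwj]
  exact mod_eq_of_Fca_mod (Fiter_lt_mul hc _) h2q hD

end Digits

section Counting

variable {p q : ℕ}

lemma eq_of_mul_mod_eq (hpq : p.Coprime q) {x y : ℕ} (h : x % p * q % p = y % p * q % p) :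
    x % p = y % p := by
  simpa [Nat.ModEq] using Nat.ModEq.cancel_right_of_coprime hpq h

lemma eq_of_mod_eq_of_mod_eq (hpq : p.Coprime q) {x y : ℕ} (hx : x < p * q) (hy : y < p * q)
    (hp : x % p = y % p) (hq : x % q = y % q) : x = y :=
  ((Nat.modEq_and_modEq_iff_modEq_mul hpq).mp ⟨hp, hq⟩).eq_of_lt_of_lt hx hy

/-- A letter `x ≡ k_d (mod p)` is recorded as `d = (x mod p) q mod p`; the last letter also
contributes its residue mod `q`. -/
def traceCode (p q n : ℕ) [NeZero q] (w : List ℕ) : (Fin n → Fin q) × Fin q :=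
  (fun i => Fin.ofNat q (w.getD i 0 % p * q % p), Fin.ofNat q (w.getD (n - 1) 0))

lemma eq_of_traceCode_eq [NeZero q] (hpq : p.Coprime q) (h2q : 2 * q ≤ p + 1) {n : ℕ}
    {u v : List ℕ} (hu : u.length = n) (hv : v.length = n)
    (hu_mem : ∀ x ∈ u, x < p * q ∧ x % p * q % p < q)
    (hv_mem : ∀ x ∈ v, x < p * q ∧ x % p * q % p < q)
    (hu_tr : inTraceLang p q u) (hv_tr : inTraceLang p q v)
    (huv : traceCode p q n u = traceCode p q n v) : u = v := by
  subst hu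
  have hmod_p : ∀ j (hju : j < u.length) (hjv : j < v.length), u[j] % p = v[j] % p := by
    intro j hju hjv
    have := congrArg Fin.val (congrFun (congrArg Prod.fst huv) ⟨j, hju⟩)
    simp only [traceCode, List.getD_eq_getElem _ _ hju, List.getD_eq_getElem _ _ hjv,
      Fin.val_ofNat, Nat.mod_eq_of_lt (hu_mem _ (List.getElem_mem hju)).2,
      Nat.mod_eq_of_lt (hv_mem _ (List.getElem_mem hjv)).2] at this
    exact eq_of_mul_mod_eq hpq this
  refine List.ext_getElem hv.symm fun j hju hjv => ?_
  refine eq_of_mod_eq_of_mod_eq hpq (hu_mem _ (List.getElem_mem hju)).1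
    (hv_mem _ (List.getElem_mem hjv)).1 (hmod_p j hju hjv) ?_
  rcases Nat.lt_or_ge (j + 1) u.length with hj | hj
  · rw [mod_eq_of_inTraceLang hu_tr h2q hj (hu_mem _ (List.getElem_mem hj)).2,
      mod_eq_of_inTraceLang hv_tr h2q (hv ▸ hj) (hv_mem _ (List.getElem_mem (hv ▸ hj))).2,
      hmod_p _ hj (hv ▸ hj)]
  · have := congrArg Fin.val (congrArg Prod.snd huv)
    obtain rfl : j = u.length - 1 := by omega
    simpa only [traceCode, Fin.val_ofNat, List.getD_eq_getElem _ _ hju,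
      List.getD_eq_getElem _ _ hjv] using this

end Counting

theorem stmt8_general (p q : ℕ) (hq : 2 ≤ q) (hpq : Nat.Coprime p q)
    (h2q : 2 * q - 1 ≤ p)
    (kd : ℕ → ℕ) (hkd : ∀ d < q, kd d < p ∧ kd d * q % p = d)
    (n : ℕ) :
    {w : List ℕ | w.length = n ∧ (∀ x ∈ w, x < p * q ∧ ∃ d < q, x % p = kd d) ∧
        inTraceLang p q w}.Finite ∧
    {w : List ℕ | w.length = n ∧ (∀ x ∈ w, x < p * q ∧ ∃ d < q, x % p = kd d) ∧
        inTraceLang p q w}.ncard ≤ q ^ (n + 1) := by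
  have : NeZero q := ⟨by omega⟩
  set S := {w : List ℕ | w.length = n ∧ (∀ x ∈ w, x < p * q ∧ ∃ d < q, x % p = kd d) ∧
    inTraceLang p q w}
  have hD : ∀ x, (∃ d < q, x % p = kd d) → x % p * q % p < q := by
    rintro x ⟨d, hd, hx⟩
    rw [hx, (hkd d hd).2]
    exact hd
  have hinj : Set.InjOn (traceCode p q n) S := by
    rintro u ⟨hu, hu_mem, hu_tr⟩ v ⟨hv, hv_mem, hv_tr⟩ huv
    exact eq_of_traceCode_eq hpq (by omega) hu hv
      (fun x hx => ⟨(hu_mem x hx).1, hD x (hu_mem x hx).2⟩)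
      (fun x hx => ⟨(hv_mem x hx).1, hD x (hv_mem x hx).2⟩) hu_tr hv_tr huv
  refine ⟨Set.Finite.of_injOn (Set.mapsTo_univ _ _) hinj Set.finite_univ, ?_⟩
  calc S.ncard ≤ (Set.univ : Set ((Fin n → Fin q) × Fin q)).ncard :=
        Set.ncard_le_ncard_of_injOn _ (fun _ _ => Set.mem_univ _) hinj
    _ = q ^ (n + 1) := by simp [Nat.card_eq_fintype_card, pow_succ]

theorem stmt8 (p q : ℕ) (hq : 2 ≤ q) (hqp : q < p) (hpq : Nat.Coprime p q)
    (h2q : 2 * q - 1 ≤ p)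
    (kd : ℕ → ℕ) (hkd : ∀ d < q, kd d < p ∧ kd d * q % p = d)
    (n : ℕ) (hn : 0 < n) :
    {w : List ℕ | w.length = n ∧ (∀ x ∈ w, x < p * q ∧ ∃ d < q, x % p = kd d) ∧
        inTraceLang p q w}.Finite ∧
    {w : List ℕ | w.length = n ∧ (∀ x ∈ w, x < p * q ∧ ∃ d < q, x % p = kd d) ∧
        inTraceLang p q w}.ncard ≤ q ^ (n + 1) :=
  stmt8_general p q hq hpq h2q kd hkd n
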